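/- Let q be a nonnegative quadratic form on a Hilbert space with associated symmetric bilinear form β satisfying |β(u,w)| ≤ √(q(u) q(w)). Suppose v = u + w with q(v) ≤ q(u)/N² for some N = ‖normalization‖ satisfying N² → 1, together with ‖w‖ ≤ Cε and an integration-by-parts bound |β(u, w)| ≤ ‖Δu‖‖w‖ with ‖Δu‖² ≤ Cε⁴. If q(u) ~ σε² as ε → 0, then q(w)/ε² → 0 and hence q(v)/ε² → σ. -/

import Mathlib

open Filter Topology

/-! The expansion `q(u + w) = q(u) + 2β(u, w) + q(w)` and `q(v) ≤ q(u)/N²` give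
`q(w) ≤ (1/N² - 1) q(u) - 2β(u, w)`. Here `(1/N² - 1) q(u) = o(ε²)` because `q(u) = O(ε²)` and
`N² → 1`, while the integration-by-parts bound makes the cross term `O(ε³)`. Hence
`q(w) = o(ε²)`, and `q(v) = q(u) + o(ε²) ~ σε²`. -/

theorem abs_le_sqrt_mul_mul_pow_three {b D n C ε : ℝ} (hb : |b| ≤ D * n) (hn₀ : 0 ≤ n)
    (hn : n ≤ C * ε) (hD : D ^ 2 ≤ C * ε ^ 4) : |b| ≤ √C * C * ε ^ 3 := by
  have hD' : |D| ≤ √C * ε ^ 2 := by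
    have hsqrt : √(ε ^ 4) = ε ^ 2 := by
      rw [show ε ^ 4 = (ε ^ 2) ^ 2 by ring, Real.sqrt_sq (sq_nonneg ε)]
    simpa [Real.sqrt_mul' C (by positivity : (0 : ℝ) ≤ ε ^ 4), hsqrt] using Real.abs_le_sqrt hD
  calc |b| ≤ D * n := hb
    _ ≤ |D| * n := mul_le_mul_of_nonneg_right (le_abs_self D) hn₀
    _ ≤ (√C * ε ^ 2) * (C * ε) := mul_le_mul hD' hn hn₀ (by positivity)
    _ = √C * C * ε ^ 3 := by ring

theorem tendsto_div_sq_zero_of_abs_le_pow_three {l : Filter ℝ} (hl : l ≤ 𝓝 0) {f : ℝ → ℝ}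
    {K : ℝ} (hf : ∀ᶠ ε in l, |f ε| ≤ K * |ε| ^ 3) :
    Tendsto (fun ε => f ε / ε ^ 2) l (𝓝 0) := by
  have hO : f =O[l] fun ε => ε ^ 3 :=
    Asymptotics.IsBigO.of_bound K (by simpa only [Real.norm_eq_abs, abs_pow] using hf)
  exact (hO.trans_isLittleO ((Asymptotics.isLittleO_pow_pow (by norm_num)).mono hl))
    |>.tendsto_div_nhds_zero

theorem tendsto_div_zero_of_add_le_mul {α : Type*} {l : Filter α} {a b c m s : α → ℝ} {σ : ℝ}
    (hc : ∀ᶠ x in l, 0 ≤ c x) (hs : ∀ᶠ x in l, 0 < s x)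
    (hle : ∀ᶠ x in l, a x + b x + c x ≤ m x * a x)
    (ha : Tendsto (fun x => a x / s x) l (𝓝 σ)) (hb : Tendsto (fun x => b x / s x) l (𝓝 0))
    (hm : Tendsto m l (𝓝 1)) : Tendsto (fun x => c x / s x) l (𝓝 0) := by
  have hupper : Tendsto (fun x => (m x - 1) * (a x / s x) - b x / s x) l (𝓝 0) := by
    simpa using ((hm.sub_const 1).mul ha).sub hb
  refine tendsto_of_tendsto_of_tendsto_of_le_of_le' tendsto_const_nhds hupper ?_ ?_
  · filter_upwards [hc, hs] with x hcx hsx using div_nonneg hcx hsx.le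
  · filter_upwards [hs, hle] with x hsx hlex
    rw [div_le_iff₀ hsx]
    calc c x ≤ (m x - 1) * a x - b x := by linarith
      _ = ((m x - 1) * (a x / s x) - b x / s x) * s x := by field_simp

theorem stmt19_general {H : Type*} [NormedAddCommGroup H] [NormedSpace ℝ H]
    (β : H → H → ℝ) (q : H → ℝ)
    (hq : ∀ x, 0 ≤ q x)
    (hexp : ∀ x y : H, q (x + y) = q x + 2 * β x y + q y)
    (v u w : ℝ → H) (N Δ : ℝ → ℝ) (σ C : ℝ) (hσ : 0 < σ)
    (hvuw : ∀ ε > (0:ℝ), v ε = u ε + w ε)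
    (hqv : ∀ ε > (0:ℝ), q (v ε) ≤ q (u ε) / (N ε) ^ 2)
    (hN : Tendsto (fun ε => (N ε) ^ 2) (𝓝[>] (0:ℝ)) (𝓝 1))
    (hwnorm : ∀ ε > (0:ℝ), ‖w ε‖ ≤ C * ε)
    (hibp : ∀ ε > (0:ℝ), |β (u ε) (w ε)| ≤ Δ ε * ‖w ε‖)
    (hΔ : ∀ ε > (0:ℝ), (Δ ε) ^ 2 ≤ C * ε ^ 4)
    (hqu : Tendsto (fun ε => q (u ε) / (σ * ε ^ 2)) (𝓝[>] (0:ℝ)) (𝓝 1)) :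
    Tendsto (fun ε => q (w ε) / ε ^ 2) (𝓝[>] (0:ℝ)) (𝓝 0) ∧
    Tendsto (fun ε => q (v ε) / ε ^ 2) (𝓝[>] (0:ℝ)) (𝓝 σ) := by
  have hpos : ∀ᶠ ε in 𝓝[>] (0:ℝ), 0 < ε := self_mem_nhdsWithin
  have hu : Tendsto (fun ε => q (u ε) / ε ^ 2) (𝓝[>] 0) (𝓝 σ) := by
    refine (mul_one σ ▸ hqu.const_mul σ).congr fun ε => ?_
    rw [← mul_div_assoc, mul_div_mul_left _ _ hσ.ne']
  have hcross : Tendsto (fun ε => 2 * β (u ε) (w ε) / ε ^ 2) (𝓝[>] 0) (𝓝 0) := by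
    refine tendsto_div_sq_zero_of_abs_le_pow_three nhdsWithin_le_nhds (K := 2 * (√C * C)) ?_
    filter_upwards [hpos] with ε hε
    rw [abs_mul, abs_two, abs_of_pos hε, mul_assoc]
    gcongr
    exact abs_le_sqrt_mul_mul_pow_three (hibp ε hε) (norm_nonneg _) (hwnorm ε hε) (hΔ ε hε)
  have hw : Tendsto (fun ε => q (w ε) / ε ^ 2) (𝓝[>] 0) (𝓝 0) := by
    refine tendsto_div_zero_of_add_le_mul (.of_forall fun ε => hq (w ε))
      (by filter_upwards [hpos] with ε hε using by positivity) ?_ hu hcross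
      (by simpa using hN.inv₀ one_ne_zero)
    filter_upwards [hpos] with ε hε
    rw [← hexp, ← hvuw ε hε, inv_mul_eq_div]
    exact hqv ε hε
  have hv := (hu.add hcross).add hw
  rw [add_zero, add_zero] at hv
  refine ⟨hw, hv.congr' ?_⟩
  filter_upwards [hpos] with ε hε
  rw [hvuw ε hε, hexp]
  ring

/-- Abstract error estimate: if v = u + w, q(v) ≤ q(u)/N² with N² → 1, ‖w‖ ≤ Cε,
|β(u,w)| ≤ ‖Δu‖‖w‖ with ‖Δu‖² ≤ Cε⁴, and q(u) ~ σε², then q(w)/ε² → 0 and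
q(v)/ε² → σ. Here q(x) = β(x,x) is a nonnegative quadratic form with symmetric
bilinear form β satisfying Cauchy–Schwarz. -/
theorem stmt19 {H : Type*} [NormedAddCommGroup H] [NormedSpace ℝ H]
    (β : H → H → ℝ) (q : H → ℝ)
    (hqβ : ∀ x, q x = β x x) (hq : ∀ x, 0 ≤ q x)
    (hexp : ∀ x y : H, q (x + y) = q x + 2 * β x y + q y)
    (hCS : ∀ x y : H, |β x y| ≤ Real.sqrt (q x * q y))
    (v u w : ℝ → H) (N Δ : ℝ → ℝ) (σ C : ℝ) (hC : 0 < C) (hσ : 0 < σ)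
    (hvuw : ∀ ε > (0:ℝ), v ε = u ε + w ε)
    (hqv : ∀ ε > (0:ℝ), q (v ε) ≤ q (u ε) / (N ε) ^ 2)
    (hN : Tendsto (fun ε => (N ε) ^ 2) (𝓝[>] (0:ℝ)) (𝓝 1))
    (hNpos : ∀ ε > (0:ℝ), 0 < N ε)
    (hwnorm : ∀ ε > (0:ℝ), ‖w ε‖ ≤ C * ε)
    (hibp : ∀ ε > (0:ℝ), |β (u ε) (w ε)| ≤ Δ ε * ‖w ε‖)
    (hΔ : ∀ ε > (0:ℝ), (Δ ε) ^ 2 ≤ C * ε ^ 4)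
    (hqu : Tendsto (fun ε => q (u ε) / (σ * ε ^ 2)) (𝓝[>] (0:ℝ)) (𝓝 1)) :
    Tendsto (fun ε => q (w ε) / ε ^ 2) (𝓝[>] (0:ℝ)) (𝓝 0) ∧
    Tendsto (fun ε => q (v ε) / ε ^ 2) (𝓝[>] (0:ℝ)) (𝓝 σ) :=
  stmt19_general β q hq hexp v u w N Δ σ C hσ hvuw hqv hN hwnorm hibp hΔ hqu
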